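/- Let C be a skeletal left Rees category. Then C is right cancellative if and only if for every atom x and every invertible arrow g with the product gx defined, gx = x implies that g is an identity. (Equivalently, C is right cancellative if and only if for every atom x the partial homomorphism φ_x, defined by φ_x(g) = h whenever gx = xh with g, h invertible, is injective.) -/

import Mathlib

open CategoryTheory

universe v u

variable {C : Type u} [Category.{v} C]

/-- The set of all arrows of a category, as a sigma type. -/
abbrev CatArr (C : Type u) [Category.{v} C] : Type (max u v) := Σ (X : C) (Y : C), X ⟶ Y

/-- An arrow is an atom if it is not invertible and in any factorization one factor
is invertible. -/
def IsAtomArrow {X Y : C} (a : X ⟶ Y) : Prop :=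
  ¬ IsIso a ∧ ∀ ⦃Z : C⦄ (b : X ⟶ Z) (c : Z ⟶ Y), a = b ≫ c → IsIso b ∨ IsIso c

/-- The principal right ideal `aC` generated by an arrow `a`. -/
def rIdeal {X Y : C} (a : X ⟶ Y) : Set (CatArr C) :=
  { p | ∃ (Z : C) (b : Y ⟶ Z), p = ⟨X, Z, a ≫ b⟩ }

/-- The principal left ideal `Ca` generated by an arrow `a`. -/
def lIdeal {X Y : C} (a : X ⟶ Y) : Set (CatArr C) :=
  { p | ∃ (Z : C) (b : Z ⟶ X), p = ⟨Z, Y, b ≫ a⟩ }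

/-- The principal two-sided ideal `CaC` generated by an arrow `a`. -/
def twoIdeal {X Y : C} (a : X ⟶ Y) : Set (CatArr C) :=
  { p | ∃ (W Z : C) (b : W ⟶ X) (c : Y ⟶ Z), p = ⟨W, Z, b ≫ a ≫ c⟩ }

/-- A category is left cancellative if `ax = ay` implies `x = y`. -/
def LeftCancellativeCat (C : Type u) [Category.{v} C] : Prop :=
  ∀ ⦃X Y Z : C⦄ (a : X ⟶ Y) (x y : Y ⟶ Z), a ≫ x = a ≫ y → x = y

/-- A category is right cancellative if `xa = ya` implies `x = y`. -/
def RightCancellativeCat (C : Type u) [Category.{v} C] : Prop :=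
  ∀ ⦃X Y Z : C⦄ (x y : X ⟶ Y) (a : Y ⟶ Z), x ≫ a = y ≫ a → x = y

/-- A category is right rigid if principal right ideals that intersect are comparable. -/
def RightRigid (C : Type u) [Category.{v} C] : Prop :=
  ∀ ⦃X Y X' Y' : C⦄ (a : X ⟶ Y) (b : X' ⟶ Y'),
    (rIdeal a ∩ rIdeal b).Nonempty → rIdeal a ⊆ rIdeal b ∨ rIdeal b ⊆ rIdeal a

/-- A category is equidivisible if every equality `ab = cd` admits an intermediate arrow. -/
def Equidivisible (C : Type u) [Category.{v} C] : Prop :=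
  ∀ ⦃W X Y Z : C⦄ (a : W ⟶ X) (b : X ⟶ Z) (c : W ⟶ Y) (d : Y ⟶ Z),
    a ≫ b = c ≫ d →
      (∃ u : Y ⟶ X, a = c ≫ u ∧ d = u ≫ b) ∨ (∃ v : X ⟶ Y, c = a ≫ v ∧ b = v ≫ d)

/-- A length functor on a category: additive on composition, zero exactly on invertible
arrows, one exactly on atoms. -/
structure LengthFunctor (C : Type u) [Category.{v} C] where
  len : ∀ ⦃X Y : C⦄, (X ⟶ Y) → ℕ
  len_comp : ∀ ⦃X Y Z : C⦄ (f : X ⟶ Y) (g : Y ⟶ Z), len (f ≫ g) = len f + len g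
  len_eq_zero_iff : ∀ ⦃X Y : C⦄ (f : X ⟶ Y), len f = 0 ↔ IsIso f
  len_eq_one_iff : ∀ ⦃X Y : C⦄ (f : X ⟶ Y), len f = 1 ↔ IsAtomArrow f

/-- A subset of the arrows is a principal right ideal if it has the form `xC`. -/
def IsPrincipalRightIdeal (S : Set (CatArr C)) : Prop :=
  ∃ (U V : C) (x : U ⟶ V), S = rIdeal x

/-- The interval `[aC, bC]` of principal right ideals between `aC` and `bC`. -/
def rInterval {X Y Z W : C} (a : X ⟶ Y) (b : Z ⟶ W) : Set (Set (CatArr C)) :=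
  { S | IsPrincipalRightIdeal S ∧ rIdeal a ⊆ S ∧ S ⊆ rIdeal b }

/-- A left Rees category: left cancellative, right rigid, and each principal right
ideal is properly contained in only finitely many principal right ideals. -/
def IsLeftReesCategory (C : Type u) [Category.{v} C] : Prop :=
  LeftCancellativeCat C ∧ RightRigid C ∧
    ∀ ⦃X Y : C⦄ (a : X ⟶ Y),
      { S : Set (CatArr C) | IsPrincipalRightIdeal S ∧ rIdeal a ⊂ S }.Finite

/-- A category is skeletal if every invertible arrow has equal domain and codomain. -/
def SkeletalCat (C : Type u) [Category.{v} C] : Prop :=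
  ∀ ⦃X Y : C⦄ (g : X ⟶ Y), IsIso g → X = Y

/-!
If `pa = qa`, right rigidity and left cancellation give `p = qu` (or symmetrically) with
`ua = a`, so right cancellation amounts to every arrow having trivial stabiliser. For this,
factor a non-invertible `a` as `a = xb` with `x` an atom (a maximal proper principal right
ideal above `aC` is generated by an atom). From `uxb = xb` the same argument applied to `b`
gives `ux = x`, whence `u` is invertible since `x` is an atom, and `u = 1` by hypothesis.
The induction is on the number of principal right ideals containing `aC`, which is finite
in a left Rees category and strictly drops from `xb` to `b` since left translation by `x`
embeds the ideals above `bC` into those above `xbC`, missing `1_X C`.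
-/

lemma self_mem_rIdeal {X Y : C} (a : X ⟶ Y) : (⟨X, Y, a⟩ : CatArr C) ∈ rIdeal a :=
  ⟨Y, 𝟙 Y, by simp⟩

lemma fst_eq_of_mem_rIdeal {X Y : C} {a : X ⟶ Y} {p : CatArr C} (hp : p ∈ rIdeal a) :
    p.1 = X := by
  obtain ⟨Z, b, rfl⟩ := hp
  rfl

lemma mem_rIdeal_iff {X Y W : C} (a : X ⟶ Y) (f : X ⟶ W) :
    (⟨X, W, f⟩ : CatArr C) ∈ rIdeal a ↔ ∃ b : Y ⟶ W, f = a ≫ b := by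
  constructor
  · rintro ⟨Z, b, hZ⟩
    obtain ⟨-, hYZ⟩ := Sigma.mk.inj_iff.mp hZ
    obtain ⟨rfl, hb⟩ := Sigma.mk.inj_iff.mp (eq_of_heq hYZ)
    exact ⟨b, eq_of_heq hb⟩
  · rintro ⟨b, rfl⟩
    exact ⟨W, b, rfl⟩

lemma rIdeal_subset_of_eq_comp {X Y W : C} {a : X ⟶ Y} {b : X ⟶ W} (c : W ⟶ Y)
    (hfac : a = b ≫ c) : rIdeal a ⊆ rIdeal b := by
  rintro p ⟨Z, d, rfl⟩
  exact ⟨Z, c ≫ d, by rw [hfac, Category.assoc]⟩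

lemma exists_eq_comp_of_rIdeal_subset {X Y W : C} {a : X ⟶ Y} {b : X ⟶ W}
    (hs : rIdeal a ⊆ rIdeal b) : ∃ c : W ⟶ Y, a = b ≫ c :=
  (mem_rIdeal_iff b a).mp (hs (self_mem_rIdeal a))

lemma rIdeal_subset_rIdeal_id {X Y : C} (a : X ⟶ Y) : rIdeal a ⊆ rIdeal (𝟙 X) :=
  rIdeal_subset_of_eq_comp a (Category.id_comp a).symm

namespace LeftCancellativeCat

variable (hlc : LeftCancellativeCat C)
include hlc

lemma isIso_of_comp_eq_id {X Y : C} {p : X ⟶ Y} {q : Y ⟶ X} (h : p ≫ q = 𝟙 X) :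
    IsIso p := by
  refine ⟨q, h, hlc p _ _ ?_⟩
  rw [← Category.assoc, h, Category.id_comp, Category.comp_id]

lemma rIdeal_eq_rIdeal_id_iff {X V : C} (x : X ⟶ V) :
    rIdeal x = rIdeal (𝟙 X) ↔ IsIso x := by
  refine ⟨fun h => ?_, fun _ => ?_⟩
  · obtain ⟨c, hc⟩ := exists_eq_comp_of_rIdeal_subset h.symm.subset
    exact hlc.isIso_of_comp_eq_id hc.symm
  · exact (rIdeal_subset_rIdeal_id x).antisymm (rIdeal_subset_of_eq_comp (inv x) (by simp))

lemma rIdeal_subset_rIdeal_of_comp {X V W W' : C} (x : X ⟶ V) {c : V ⟶ W} {c' : V ⟶ W'}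
    (hs : rIdeal (x ≫ c) ⊆ rIdeal (x ≫ c')) : rIdeal c ⊆ rIdeal c' := by
  obtain ⟨e, he⟩ := exists_eq_comp_of_rIdeal_subset hs
  exact rIdeal_subset_of_eq_comp e (hlc x _ _ (by simpa only [Category.assoc] using he))

lemma isAtomArrow_of_maximal {X W : C} {c : X ⟶ W} (hc : ¬ IsIso c)
    (hmax : ∀ ⦃Z : C⦄ (p : X ⟶ Z), ¬ IsIso p →
      rIdeal c ⊆ rIdeal p → rIdeal p ⊆ rIdeal c) :
    IsAtomArrow c := by
  refine ⟨hc, fun Z p q hfac => or_iff_not_imp_left.mpr fun hp => ?_⟩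
  obtain ⟨d, hd⟩ :=
    exists_eq_comp_of_rIdeal_subset (hmax p hp (rIdeal_subset_of_eq_comp q hfac))
  have hdq : d ≫ q = 𝟙 W :=
    hlc c _ _ (by rw [Category.comp_id, ← Category.assoc, ← hd, ← hfac])
  have hqd : q ≫ d = 𝟙 Z := hlc p _ _ (by
    rw [Category.comp_id, hd, Category.assoc, ← Category.assoc d, hdq, Category.id_comp])
  exact ⟨d, hqd, hdq⟩

lemma eq_of_comp_eq_comp (hrr : RightRigid C) {X Y Z : C} {p q : X ⟶ Y} {a : Y ⟶ Z}
    (hpq : p ≫ a = q ≫ a) (hstab : ∀ u : Y ⟶ Y, u ≫ a = a → u = 𝟙 Y) : p = q := by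
  have hne : (rIdeal p ∩ rIdeal q).Nonempty := ⟨_, ⟨Z, a, rfl⟩, ⟨Z, a, by rw [hpq]⟩⟩
  rcases hrr p q hne with hs | hs
  · obtain ⟨u, rfl⟩ := exists_eq_comp_of_rIdeal_subset hs
    rw [hstab u (hlc q _ _ (by simpa only [Category.assoc] using hpq)), Category.comp_id]
  · obtain ⟨u, rfl⟩ := exists_eq_comp_of_rIdeal_subset hs
    rw [hstab u (hlc p _ _ (by simpa only [Category.assoc] using hpq.symm)), Category.comp_id]

end LeftCancellativeCat

def rIdealsAbove {X Y : C} (a : X ⟶ Y) : Set (Set (CatArr C)) :=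
  {S | IsPrincipalRightIdeal S ∧ rIdeal a ⊆ S}

lemma exists_eq_rIdeal_of_mem_rIdealsAbove {V Y : C} {b : V ⟶ Y} {S : Set (CatArr C)}
    (hS : S ∈ rIdealsAbove b) :
    ∃ (W : C) (c : V ⟶ W), S = rIdeal c ∧ rIdeal b ⊆ rIdeal c := by
  obtain ⟨⟨U, W, c, rfl⟩, hsub⟩ := hS
  obtain rfl : V = U := fst_eq_of_mem_rIdeal (hsub (self_mem_rIdeal b))
  exact ⟨W, c, rfl, hsub⟩

def leftTranslate {X V : C} (x : X ⟶ V) (S : Set (CatArr C)) : Set (CatArr C) :=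
  {q | ∃ (Z : C) (c : V ⟶ Z), (⟨V, Z, c⟩ : CatArr C) ∈ S ∧ q = ⟨X, Z, x ≫ c⟩}

lemma leftTranslate_rIdeal {X V W : C} (x : X ⟶ V) (c : V ⟶ W) :
    leftTranslate x (rIdeal c) = rIdeal (x ≫ c) := by
  ext q
  constructor
  · rintro ⟨Z, c', hc', rfl⟩
    obtain ⟨d, rfl⟩ := (mem_rIdeal_iff c c').mp hc'
    exact ⟨Z, d, by rw [Category.assoc]⟩
  · rintro ⟨Z, d, rfl⟩
    exact ⟨Z, c ≫ d, ⟨Z, d, rfl⟩, by rw [Category.assoc]⟩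

namespace IsLeftReesCategory

variable (h : IsLeftReesCategory C)
include h

lemma finite_rIdealsAbove {X Y : C} (a : X ⟶ Y) : (rIdealsAbove a).Finite := by
  refine ((h.2.2 a).insert (rIdeal a)).subset fun S ⟨hp, hsub⟩ => ?_
  rcases eq_or_ne S (rIdeal a) with rfl | hne
  · exact Set.mem_insert _ _
  · exact Set.mem_insert_of_mem _ ⟨hp, hsub.ssubset_of_ne hne.symm⟩

lemma exists_isAtomArrow_comp {X Y : C} (a : X ⟶ Y) (ha : ¬ IsIso a) :
    ∃ (V : C) (x : X ⟶ V) (b : V ⟶ Y), IsAtomArrow x ∧ a = x ≫ b := by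
  have hlc := h.1
  set T := {S ∈ rIdealsAbove a | S ≠ rIdeal (𝟙 X)}
  have hT : T.Nonempty :=
    ⟨rIdeal a, ⟨⟨X, Y, a, rfl⟩, subset_rfl⟩, mt (hlc.rIdeal_eq_rIdeal_id_iff a).mp ha⟩
  obtain ⟨M, ⟨hM, hM1⟩, hmax⟩ :=
    ((h.finite_rIdealsAbove a).subset fun _ hS => hS.1).exists_maximal hT
  obtain ⟨W, c, rfl, hac⟩ := exists_eq_rIdeal_of_mem_rIdealsAbove hM
  obtain ⟨b, hb⟩ := exists_eq_comp_of_rIdeal_subset hac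
  refine ⟨W, c, b, hlc.isAtomArrow_of_maximal (mt (hlc.rIdeal_eq_rIdeal_id_iff c).mpr hM1)
    fun Z p hp hcp => hmax ⟨⟨⟨X, Z, p, rfl⟩, hac.trans hcp⟩, ?_⟩ hcp, hb⟩
  exact mt (hlc.rIdeal_eq_rIdeal_id_iff p).mp hp

lemma ncard_rIdealsAbove_lt_comp {X V Y : C} (x : X ⟶ V) (hx : ¬ IsIso x) (b : V ⟶ Y) :
    (rIdealsAbove b).ncard < (rIdealsAbove (x ≫ b)).ncard := by
  have hlc := h.1
  have hmaps : leftTranslate x '' rIdealsAbove b ⊆ rIdealsAbove (x ≫ b) := by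
    rintro _ ⟨S, hS, rfl⟩
    obtain ⟨W, c, rfl, hbc⟩ := exists_eq_rIdeal_of_mem_rIdealsAbove hS
    obtain ⟨d, hd⟩ := exists_eq_comp_of_rIdeal_subset hbc
    rw [leftTranslate_rIdeal]
    exact ⟨⟨X, W, x ≫ c, rfl⟩, rIdeal_subset_of_eq_comp d (by rw [hd, Category.assoc])⟩
  have hinj : Set.InjOn (leftTranslate x) (rIdealsAbove b) := by
    intro S hS S' hS' heq
    obtain ⟨W, c, rfl, -⟩ := exists_eq_rIdeal_of_mem_rIdealsAbove hS
    obtain ⟨W', c', rfl, -⟩ := exists_eq_rIdeal_of_mem_rIdealsAbove hS'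
    rw [leftTranslate_rIdeal, leftTranslate_rIdeal] at heq
    exact (hlc.rIdeal_subset_rIdeal_of_comp x heq.subset).antisymm
      (hlc.rIdeal_subset_rIdeal_of_comp x heq.symm.subset)
  have hid : rIdeal (𝟙 X) ∉ leftTranslate x '' rIdealsAbove b := by
    rintro ⟨S, hS, hSeq⟩
    obtain ⟨W, c, rfl, -⟩ := exists_eq_rIdeal_of_mem_rIdealsAbove hS
    rw [leftTranslate_rIdeal, hlc.rIdeal_eq_rIdeal_id_iff] at hSeq
    exact hx (hlc.isIso_of_comp_eq_id (q := c ≫ inv (x ≫ c))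
      (by rw [← Category.assoc, IsIso.hom_inv_id]))
  rw [← hinj.ncard_image]
  have hid_mem : rIdeal (𝟙 X) ∈ rIdealsAbove (x ≫ b) :=
    ⟨⟨X, X, 𝟙 X, rfl⟩, rIdeal_subset_rIdeal_id _⟩
  exact Set.ncard_lt_ncard ((Set.ssubset_iff_of_subset hmaps).mpr ⟨_, hid_mem, hid⟩)
    (h.finite_rIdealsAbove _)

lemma eq_id_of_comp_eq_self
    (hat : ∀ ⦃X Y : C⦄ (x : X ⟶ Y), IsAtomArrow x →
      ∀ g : X ⟶ X, IsIso g → g ≫ x = x → g = 𝟙 X)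
    {X Y : C} (a : X ⟶ Y) (u : X ⟶ X) (hu : u ≫ a = a) : u = 𝟙 X := by
  by_cases ha : IsIso a
  · simpa using congrArg (· ≫ inv a) hu
  obtain ⟨V, x, b, hx, hab⟩ := h.exists_isAtomArrow_comp a ha
  rw [hab] at hu
  have hux : u ≫ x = x :=
    h.1.eq_of_comp_eq_comp h.2.1 (by simpa only [Category.assoc] using hu)
      fun w hw => eq_id_of_comp_eq_self hat b w hw
  exact hat x hx u ((hx.2 u x hux.symm).resolve_right hx.1) hux
termination_by (rIdealsAbove a).ncard
decreasing_by rw [hab]; exact h.ncard_rIdealsAbove_lt_comp x hx.1 b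

end IsLeftReesCategory

theorem rightCancellative_iff_free_on_atoms_general (h : IsLeftReesCategory C) :
    RightCancellativeCat C ↔
      ∀ ⦃X Y : C⦄ (x : X ⟶ Y), IsAtomArrow x →
        ∀ g : X ⟶ X, IsIso g → g ≫ x = x → g = 𝟙 X := by
  refine ⟨fun hrc X Y x _ g _ hgx => hrc g (𝟙 X) x (by rw [hgx, Category.id_comp]), ?_⟩
  intro hat X Y Z p q a hpq
  exact h.1.eq_of_comp_eq_comp h.2.1 hpq (h.eq_id_of_comp_eq_self hat a)

/-- A skeletal left Rees category is right cancellative iff for every atom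
`x` and every invertible `g` with `gx` defined, `gx = x` implies that `g` is an
identity. -/
theorem rightCancellative_iff_free_on_atoms (h : IsLeftReesCategory C)
    (hsk : SkeletalCat C) :
    RightCancellativeCat C ↔
      ∀ ⦃X Y : C⦄ (x : X ⟶ Y), IsAtomArrow x →
        ∀ g : X ⟶ X, IsIso g → g ≫ x = x → g = 𝟙 X :=
  rightCancellative_iff_free_on_atoms_general h
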